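/- arXiv:2605.15114 — 2 statements merged into one kernel-verified Lean document; each statement's English description precedes it below -/
import Mathlib

section
/- Let X be a finite set and p a probability distribution on X. For even n, define the duplicated distribution p̃_n on X^n by p̃_n(x₁,…,x_n) = ∏_{j odd, 1≤j≤n−1} p(x_j)·1[x_{j+1} = x_j]. Then for every fixed k ≥ 1 and every even n with n > 2k, binom(n,k)^{−1} Σ_{I⊆[n], |I|=k} ‖(p̃_n)_I − p^{×k}‖₁ ≤ 2·(1 − ∏_{j=1}^{k} (n−2j)/n); in particular, for every fixed k the left-hand side tends to 0 as n → ∞ along even n, so the duplicated source is weakly almost i.i.d. along p. -/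
/-!
Under `p̃ₙ` the coordinates come in pairs `{2m, 2m + 1}`, each carrying one `p`-distributed
symbol, independently across pairs: `p̃ₙ` is the pushforward of `p^{×n/2}` along
`g ↦ g ∘ (j ↦ j / 2)`. Hence the marginal on a set `I` meeting every pair at most once is exactly
`p^{×|I|}`, while for the remaining `I` the ℓ¹ distance is at most `2`. Among the `C(n, k)` sets of
size `k` there are `C(n/2, k) 2^k` such pair-free ones, and
`C(n/2, k) 2^k / C(n, k) = ∏_{j<k} (n - 2j) / (n - j) ≥ ∏_{j=1}^{k} (n - 2j) / n`.
-/

open scoped BigOperators ComplexOrder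
open Filter Matrix

noncomputable section

namespace AlmostIID

/-- The trace norm `‖A‖₁ = Tr √(A†A)` of a square complex matrix. -/
def traceNorm {m : Type*} [Fintype m] [DecidableEq m] (A : Matrix m m ℂ) : ℝ :=
  (((Matrix.posSemidef_conjTranspose_mul_self A).1.eigenvectorUnitary.1 *
      Matrix.diagonal (((↑) : ℝ → ℂ) ∘ Real.sqrt ∘ (Matrix.posSemidef_conjTranspose_mul_self A).1.eigenvalues) *
      (star (Matrix.posSemidef_conjTranspose_mul_self A).1.eigenvectorUnitary : Matrix m m ℂ)).trace).re

/-- A density matrix (state): positive semidefinite with unit trace. -/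
def IsState {m : Type*} [Fintype m] (M : Matrix m m ℂ) : Prop :=
  M.PosSemidef ∧ M.trace = 1

/-- The marginal (reduced density matrix) of an `n`-partite operator on the
coordinates in `I`, i.e. the partial trace over the complement of `I`. -/
def marginal {κ : Type*} [Fintype κ] {n : ℕ}
    (M : Matrix (Fin n → κ) (Fin n → κ) ℂ) (I : Finset (Fin n)) :
    Matrix ({i : Fin n // i ∈ I} → κ) ({i : Fin n // i ∈ I} → κ) ℂ :=
  fun a b => ∑ f : {i : Fin n // i ∉ I} → κ,
    M (fun i => if h : i ∈ I then a ⟨i, h⟩ else f ⟨i, h⟩)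
      (fun i => if h : i ∈ I then b ⟨i, h⟩ else f ⟨i, h⟩)

/-- The single-site reduced density matrix on the `i`-th tensor factor. -/
def siteMarginal {κ : Type*} [Fintype κ] {n : ℕ}
    (M : Matrix (Fin n → κ) (Fin n → κ) ℂ) (i : Fin n) : Matrix κ κ ℂ :=
  fun a b => ∑ f : {j : Fin n // j ≠ i} → κ,
    M (fun j => if h : j = i then a else f ⟨j, h⟩)
      (fun j => if h : j = i then b else f ⟨j, h⟩)

/-- The i.i.d. product state `ρ^{⊗ι}` on the tensor factors indexed by `ι`. -/
def iidOn {κ : Type*} (ι : Type*) [Fintype ι] (ρ : Matrix κ κ ℂ) :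
    Matrix (ι → κ) (ι → κ) ℂ :=
  fun a b => ∏ i, ρ (a i) (b i)

/-- The product state `φ 0 ⊗ φ 1 ⊗ ⋯`. -/
def prodState {κ : Type*} {ι : Type*} [Fintype ι] (φ : ι → Matrix κ κ ℂ) :
    Matrix (ι → κ) (ι → κ) ℂ :=
  fun a b => ∏ i, φ i (a i) (b i)

/-- The quantum Wasserstein norm of order 1 of a difference of states:
the minimum of `Σ cᵢ` over decompositions `X = Σ cᵢ (τ⁽ⁱ⁾ − η⁽ⁱ⁾)` with `cᵢ ≥ 0`,
`τ⁽ⁱ⁾, η⁽ⁱ⁾` states with equal partial traces over the `i`-th factor. -/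
def W1 {κ : Type*} [Fintype κ] [DecidableEq κ] {n : ℕ}
    (X : Matrix (Fin n → κ) (Fin n → κ) ℂ) : ℝ :=
  sInf { w : ℝ |
    ∃ (c : Fin n → ℝ) (τ η : Fin n → Matrix (Fin n → κ) (Fin n → κ) ℂ),
      (∀ i, 0 ≤ c i) ∧ (∀ i, IsState (τ i)) ∧ (∀ i, IsState (η i)) ∧
      (∀ i, marginal (τ i) ({i}ᶜ : Finset (Fin n)) = marginal (η i) ({i}ᶜ : Finset (Fin n))) ∧
      X = ∑ i, c i • (τ i - η i) ∧ w = ∑ i, c i }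

/-- The local variation norm. -/
def LV {κ : Type*} [Fintype κ] [DecidableEq κ] {n : ℕ}
    (X : Matrix (Fin n → κ) (Fin n → κ) ℂ) : ℝ :=
  (1/2) * ∑ k ∈ Finset.Icc 1 n, ((2:ℝ)^k)⁻¹ *
    (((n.choose k : ℝ))⁻¹ *
      ∑ I ∈ Finset.powersetCard k (Finset.univ : Finset (Fin n)),
        traceNorm (marginal X I))


/-- The marginal of a probability distribution on `X^n` on the coordinates in `I`. -/
def cMarginal {X : Type*} [Fintype X] {n : ℕ} (P : (Fin n → X) → ℝ) (I : Finset (Fin n)) :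
    ({i : Fin n // i ∈ I} → X) → ℝ :=
  fun a => ∑ f : {i : Fin n // i ∉ I} → X,
    P (fun i => if h : i ∈ I then a ⟨i, h⟩ else f ⟨i, h⟩)

/-- The i.i.d. distribution `p^{×ι}` on `X^ι`. -/
def cIID {X : Type*} (ι : Type*) [Fintype ι] (p : X → ℝ) : (ι → X) → ℝ :=
  fun a => ∏ i, p (a i)

/-- The duplicated distribution `p̃ₙ` on `Xⁿ` (for even `n`): odd-position symbols are
drawn i.i.d. from `p` and each even-position symbol copies its predecessor. -/
def dupDist {X : Type*} [DecidableEq X] (p : X → ℝ) (n : ℕ) : (Fin n → X) → ℝ :=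
  fun x => ∏ i : Fin (n / 2),
    p (x ⟨2 * i.val, by have := i.isLt; omega⟩) *
      (if x ⟨2 * i.val + 1, by have := i.isLt; omega⟩
          = x ⟨2 * i.val, by have := i.isLt; omega⟩ then 1 else 0)

open Finset

section MapDist
variable {α β γ X : Type*} [Fintype α] [DecidableEq β]

def mapDist (f : α → β) (P : α → ℝ) (b : β) : ℝ := ∑ a with f a = b, P a

lemma sum_mapDist [Fintype β] (f : α → β) (P : α → ℝ) : ∑ b, mapDist f P b = ∑ a, P a :=
  Finset.sum_fiberwise _ f P

lemma mapDist_nonneg {P : α → ℝ} (hP : ∀ a, 0 ≤ P a) (f : α → β) (b : β) : 0 ≤ mapDist f P b :=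
  sum_nonneg fun a _ => hP a

lemma mapDist_mapDist [Fintype β] [DecidableEq γ] (f : α → β) (g : β → γ) (P : α → ℝ) :
    mapDist g (mapDist f P) = mapDist (g ∘ f) P := by
  funext c
  rw [mapDist, mapDist, ← sum_fiberwise_of_maps_to (g := f) (t := {b | g b = c})
    (fun a ha => by simpa using ha)]
  refine sum_congr rfl fun b hb => sum_congr ?_ fun _ _ => rfl
  ext a
  simp only [mem_filter, mem_univ, true_and, Function.comp_apply] at hb ⊢
  exact ⟨fun h => ⟨h ▸ hb, h⟩, And.right⟩

lemma sum_mul_prod_ite_eq_of_subsingleton {ι : Type*} [Fintype X] [DecidableEq X] {p : X → ℝ}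
    (hp1 : ∑ x, p x = 1) (a : ι → X) {s : Finset ι} (hs : (s : Set ι).Subsingleton) :
    ∑ u, p u * ∏ i ∈ s, (if u = a i then 1 else 0) = ∏ i ∈ s, p (a i) := by
  rcases hs.eq_empty_or_singleton with hs | ⟨i, hs⟩
  · simp [coe_eq_empty.mp hs, hp1]
  · simp [coe_eq_singleton.mp hs]

lemma mapDist_comp_cIID {ι κ : Type*} [Fintype ι] [Fintype κ] [DecidableEq κ] [Fintype X]
    [DecidableEq X] {p : X → ℝ} (hp1 : ∑ x, p x = 1) {e : ι → κ} (he : e.Injective) :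
    mapDist (fun x => x ∘ e) (cIID κ p) = cIID ι p := by
  classical
  funext a
  have hind : ∀ x : κ → X, (if x ∘ e = a then (1 : ℝ) else 0)
      = ∏ k, ∏ i with e i = k, if x k = a i then 1 else 0 := fun x =>
    calc (if x ∘ e = a then (1 : ℝ) else 0) = ∏ i, if x (e i) = a i then 1 else 0 := by
          rw [prod_boole]; simp [funext_iff]
      _ = ∏ k, ∏ i with e i = k, if x (e i) = a i then 1 else 0 := (prod_fiberwise _ e _).symm
      _ = ∏ k, ∏ i with e i = k, if x k = a i then 1 else 0 :=
          prod_congr rfl fun k _ => prod_congr rfl fun i hi => by rw [(mem_filter.mp hi).2]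
  calc mapDist (fun x => x ∘ e) (cIID κ p) a
      = ∑ x : κ → X, ∏ k, p (x k) * ∏ i with e i = k, if x k = a i then 1 else 0 := by
        rw [mapDist, sum_filter]
        refine sum_congr rfl fun x _ => ?_
        rw [← mul_boole, hind, cIID, ← prod_mul_distrib]
    _ = ∏ k, ∑ u, p u * ∏ i with e i = k, if u = a i then 1 else 0 :=
        (Fintype.prod_sum fun k u => p u * ∏ i with e i = k, if u = a i then (1 : ℝ) else 0).symm
    _ = ∏ k, ∏ i with e i = k, p (a i) :=
        prod_congr rfl fun k _ => sum_mul_prod_ite_eq_of_subsingleton hp1 a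
          fun i hi j hj => he ((mem_filter.mp hi).2.trans (mem_filter.mp hj).2.symm)
    _ = cIID ι p a := prod_fiberwise_of_maps_to (by simp) _

lemma sum_cIID [Fintype X] (ι : Type*) [Fintype ι] [DecidableEq ι] {p : X → ℝ}
    (hp1 : ∑ x, p x = 1) :
    ∑ a, cIID ι p a = 1 := by
  rw [show ∑ a, cIID ι p a = ∑ a : ι → X, ∏ i, p (a i) from rfl,
    ← Fintype.prod_sum fun (_ : ι) u => p u]
  simp [hp1]

lemma sum_abs_sub_le_two {ι : Type*} [Fintype ι] {P Q : ι → ℝ} (hP0 : ∀ i, 0 ≤ P i)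
    (hQ0 : ∀ i, 0 ≤ Q i) (hP1 : ∑ i, P i = 1) (hQ1 : ∑ i, Q i = 1) :
    ∑ i, |P i - Q i| ≤ 2 :=
  calc ∑ i, |P i - Q i| ≤ ∑ i, (P i + Q i) :=
        sum_le_sum fun i _ => abs_sub_le_iff.mpr ⟨by linarith [hQ0 i], by linarith [hP0 i]⟩
    _ = 2 := by rw [sum_add_distrib, hP1, hQ1]; norm_num

end MapDist

section Marginal
variable {X : Type*} [Fintype X] [DecidableEq X] {n : ℕ}

lemma cMarginal_eq_mapDist (P : (Fin n → X) → ℝ) (I : Finset (Fin n)) :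
    cMarginal P I = mapDist I.restrict P := by
  funext a
  set e := Equiv.piEquivPiSubtypeProd (· ∈ I) fun _ => X
  have hres : ∀ y, I.restrict (e.symm y) = y.1 := fun y => congrArg Prod.fst (e.apply_symm_apply y)
  rw [mapDist, sum_filter, ← e.symm.sum_comp, Fintype.sum_prod_type]
  simp only [hres, sum_ite_irrel, sum_const_zero, sum_ite_eq', mem_univ, if_true]
  rfl

end Marginal

section Duplication
variable {X : Type*} {n : ℕ}

def half (hn : Even n) (j : Fin n) : Fin (n / 2) :=
  ⟨j / 2, by have := j.isLt; obtain ⟨r, rfl⟩ := hn; omega⟩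

def pairFst (m : Fin (n / 2)) : Fin n := ⟨2 * m, by have := m.isLt; omega⟩

def pairSnd (m : Fin (n / 2)) : Fin n := ⟨2 * m + 1, by have := m.isLt; omega⟩

@[simp] lemma half_pairFst (hn : Even n) (m : Fin (n / 2)) : half hn (pairFst m) = m := by
  ext; simp only [half, pairFst]; omega

@[simp] lemma half_pairSnd (hn : Even n) (m : Fin (n / 2)) : half hn (pairSnd m) = m := by
  ext; simp only [half, pairSnd]; omega

lemma eq_pairFst_or_eq_pairSnd (hn : Even n) (j : Fin n) :
    j = pairFst (half hn j) ∨ j = pairSnd (half hn j) := by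
  simp only [Fin.ext_iff, half, pairFst, pairSnd]; omega

lemma comp_half_eq_iff (hn : Even n) {g : Fin (n / 2) → X} {x : Fin n → X} :
    g ∘ half hn = x ↔ g = x ∘ pairFst ∧ ∀ m, x (pairSnd m) = x (pairFst m) := by
  constructor
  · rintro rfl
    simp [funext_iff]
  · rintro ⟨rfl, hx⟩
    funext j
    rcases eq_pairFst_or_eq_pairSnd hn j with hj | hj
    · exact congrArg x hj.symm
    · rw [Function.comp_apply, Function.comp_apply, ← hx, ← hj]

lemma dupDist_eq_mapDist [Fintype X] [DecidableEq X] (hn : Even n) (p : X → ℝ) :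
    dupDist p n = mapDist (fun g => g ∘ half hn) (cIID (Fin (n / 2)) p) := by
  funext x
  rw [mapDist, sum_filter]
  simp only [comp_half_eq_iff, ite_and, sum_ite_eq', mem_univ, if_true]
  rw [dupDist, prod_mul_distrib, prod_boole]
  simp only [mem_univ, forall_const, mul_ite, mul_one, mul_zero]
  rfl

end Duplication

section Counting
variable {n : ℕ}

def pairElt (T : Finset (Fin (n / 2))) (m : Fin (n / 2)) : Fin n :=
  if m ∈ T then pairSnd m else pairFst m

@[simp] lemma half_pairElt (hn : Even n) (T : Finset (Fin (n / 2))) (m : Fin (n / 2)) :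
    half hn (pairElt T m) = m := by
  unfold pairElt; split_ifs <;> simp

lemma pairElt_val_mod_two_eq_one_iff (T : Finset (Fin (n / 2))) (m : Fin (n / 2)) :
    (pairElt T m).val % 2 = 1 ↔ m ∈ T := by
  unfold pairElt; split_ifs with h <;> simp [h, pairFst, pairSnd, Nat.add_mod]

/-- Distinct `(M, T)` with `T ⊆ M` give distinct subsets `{pairElt T m | m ∈ M}` of `Fin n`,
each meeting every pair `{2m, 2m + 1}` at most once. -/
lemma choose_mul_two_pow_le_card_injOn (hn : Even n) (k : ℕ) :
    (n / 2).choose k * 2 ^ k ≤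
      #((powersetCard k univ).filter fun I : Finset (Fin n) => Set.InjOn (half hn) I) := by
  set D := (powersetCard k (univ : Finset (Fin (n / 2)))).sigma fun M => M.powerset
  have hD : #D = (n / 2).choose k * 2 ^ k := by
    rw [card_sigma, sum_congr rfl fun M hM => by rw [card_powerset, mem_powersetCard_univ.mp hM],
      sum_const, card_powersetCard, card_univ, Fintype.card_fin, smul_eq_mul]
  have hinj : ∀ T : Finset (Fin (n / 2)), Function.Injective (pairElt (n := n) T) :=
    fun T => Function.LeftInverse.injective (half_pairElt hn T)
  have hdecode : ∀ x ∈ D, (x.1.image (pairElt x.2)).image (half hn) = x.1 ∧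
      ((x.1.image (pairElt x.2)).filter fun j => j.val % 2 = 1).image (half hn) = x.2 := by
    rintro ⟨M, T⟩ hx
    have hTM : T ⊆ M := mem_powerset.mp (mem_sigma.mp hx).2
    simp only [image_image, filter_image, pairElt_val_mod_two_eq_one_iff, Function.comp_def,
      half_pairElt, image_id', filter_mem_eq_inter, inter_eq_right.mpr hTM, and_self]
  rw [← hD]
  refine card_le_card_of_injOn (fun x => x.1.image (pairElt x.2)) ?_ ?_
  · rintro ⟨M, T⟩ hx
    have hM : #M = k := mem_powersetCard_univ.mp (mem_sigma.mp hx).1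
    rw [mem_coe, mem_filter, mem_powersetCard_univ, card_image_of_injective _ (hinj T), hM]
    refine ⟨rfl, ?_⟩
    rintro _ hi _ hj hij
    obtain ⟨m, -, rfl⟩ := mem_image.mp hi
    obtain ⟨m', -, rfl⟩ := mem_image.mp hj
    simp only [half_pairElt] at hij
    rw [hij]
  · intro x hx y hy hxy
    obtain ⟨hx1, hx2⟩ := hdecode x hx
    obtain ⟨hy1, hy2⟩ := hdecode y hy
    simp only at hxy
    rw [hxy] at hx1 hx2
    exact Sigma.ext (hx1.symm.trans hy1) (heq_of_eq (hx2.symm.trans hy2))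

lemma prod_Icc_le_prod_range {f : ℕ → ℕ} (hf : Antitone f) (k : ℕ) :
    ∏ j ∈ Icc 1 k, f j ≤ ∏ j ∈ range k, f j := by
  induction k with
  | zero => simp
  | succ k ih =>
    rw [prod_Icc_succ_top (by omega), prod_range_succ]
    exact Nat.mul_le_mul ih (hf k.le_succ)

lemma choose_mul_prod_sub_le (hn : Even n) (k : ℕ) :
    n.choose k * ∏ j ∈ Icc 1 k, (n - 2 * j) ≤ n ^ k * ((n / 2).choose k * 2 ^ k) := by
  obtain ⟨N, rfl⟩ := hn
  have hN : (N + N) / 2 = N := by omega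
  have hpairs : ∏ j ∈ range k, (N + N - 2 * j) = 2 ^ k * N.descFactorial k := by
    rw [Nat.descFactorial_eq_prod_range, pow_eq_prod_const, ← prod_mul_distrib]
    exact prod_congr rfl fun j _ => by omega
  refine Nat.le_of_mul_le_mul_left ?_ k.factorial_pos
  calc k.factorial * ((N + N).choose k * ∏ j ∈ Icc 1 k, (N + N - 2 * j))
      = (N + N).descFactorial k * ∏ j ∈ Icc 1 k, (N + N - 2 * j) := by
        rw [Nat.descFactorial_eq_factorial_mul_choose, mul_assoc]
    _ ≤ (N + N) ^ k * ∏ j ∈ range k, (N + N - 2 * j) :=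
        Nat.mul_le_mul (Nat.descFactorial_le_pow _ _)
          (prod_Icc_le_prod_range (fun _ _ h => by omega) k)
    _ = k.factorial * ((N + N) ^ k * (((N + N) / 2).choose k * 2 ^ k)) := by
        rw [hpairs, hN, Nat.descFactorial_eq_factorial_mul_choose]; ring

end Counting

def avgMarginalL1 {X : Type*} [Fintype X] {n : ℕ} (p : X → ℝ)
    (P : (Fin n → X) → ℝ) (k : ℕ) : ℝ :=
  ((n.choose k : ℝ))⁻¹ * ∑ I ∈ powersetCard k (univ : Finset (Fin n)),
    ∑ a : {i : Fin n // i ∈ I} → X, |cMarginal P I a - cIID {i : Fin n // i ∈ I} p a|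

lemma avgMarginalL1_nonneg {X : Type*} [Fintype X] {n : ℕ} (p : X → ℝ)
    (P : (Fin n → X) → ℝ) (k : ℕ) : 0 ≤ avgMarginalL1 p P k := by
  unfold avgMarginalL1; positivity

section Bound
variable {X : Type*} [Fintype X] [DecidableEq X] {p : X → ℝ} {n : ℕ}

lemma cMarginal_dupDist_of_injOn (hn : Even n) (hp1 : ∑ x, p x = 1) {I : Finset (Fin n)}
    (hI : Set.InjOn (half hn) I) : cMarginal (dupDist p n) I = cIID {i // i ∈ I} p := by
  rw [cMarginal_eq_mapDist, dupDist_eq_mapDist hn, mapDist_mapDist]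
  exact mapDist_comp_cIID (e := half hn ∘ Subtype.val) hp1 fun i j h => Subtype.ext (hI i.2 j.2 h)

lemma sum_abs_cMarginal_dupDist_sub_le (hn : Even n) (hp0 : ∀ x, 0 ≤ p x)
    (hp1 : ∑ x, p x = 1) (I : Finset (Fin n)) :
    ∑ a, |cMarginal (dupDist p n) I a - cIID {i // i ∈ I} p a|
      ≤ 2 * (1 - if Set.InjOn (half hn) I then 1 else 0) := by
  split_ifs with hI
  · simp [cMarginal_dupDist_of_injOn hn hp1 hI]
  · rw [sub_zero, mul_one, cMarginal_eq_mapDist, dupDist_eq_mapDist hn]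
    refine sum_abs_sub_le_two (mapDist_nonneg (mapDist_nonneg ?_ _) _)
      (fun a => prod_nonneg fun i _ => hp0 (a i)) ?_ (sum_cIID _ hp1)
    · exact fun g => prod_nonneg fun m _ => hp0 (g m)
    · rw [sum_mapDist, sum_mapDist, sum_cIID _ hp1]

lemma prod_Icc_sub_two_mul_eq_cast {k : ℕ} (hk : 2 * k ≤ n) :
    ∏ j ∈ Icc 1 k, ((n : ℝ) - 2 * j) = ((∏ j ∈ Icc 1 k, (n - 2 * j) : ℕ) : ℝ) := by
  push_cast
  refine prod_congr rfl fun j hj => ?_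
  rw [Nat.cast_sub (by linarith [(mem_Icc.mp hj).2])]
  push_cast; ring

lemma avgMarginalL1_dupDist_le (hp0 : ∀ x, 0 ≤ p x) (hp1 : ∑ x, p x = 1) {k : ℕ} (hn : Even n)
    (hkn : 2 * k < n) :
    avgMarginalL1 p (dupDist p n) k ≤ 2 * (1 - ∏ j ∈ Icc 1 k, (((n : ℝ) - 2 * j) / n)) := by
  set G := #((powersetCard k univ).filter fun I : Finset (Fin n) => Set.InjOn (half hn) I)
  have hsum : ∑ I ∈ powersetCard k (univ : Finset (Fin n)),
      ∑ a, |cMarginal (dupDist p n) I a - cIID {i // i ∈ I} p a| ≤ 2 * (n.choose k - G) :=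
    calc _ ≤ ∑ I ∈ powersetCard k (univ : Finset (Fin n)),
            2 * (1 - if Set.InjOn (half hn) I then (1 : ℝ) else 0) :=
          sum_le_sum fun I _ => sum_abs_cMarginal_dupDist_sub_le hn hp0 hp1 I
      _ = 2 * (n.choose k - G) := by
          rw [← mul_sum, sum_sub_distrib, sum_boole, sum_const, card_powersetCard, card_univ,
            Fintype.card_fin, nsmul_one]
  have hcount : (n.choose k : ℝ) * ∏ j ∈ Icc 1 k, (((n : ℝ) - 2 * j) / n) ≤ G := by
    have hnk : (0 : ℝ) < (n : ℝ) ^ k := pow_pos (Nat.cast_pos.mpr (by omega)) k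
    have h := choose_mul_prod_sub_le hn k
    have hG := choose_mul_two_pow_le_card_injOn hn k
    rw [prod_div_distrib, prod_const, Nat.card_Icc, Nat.add_sub_cancel, mul_div_assoc',
      div_le_iff₀ hnk, prod_Icc_sub_two_mul_eq_cast hkn.le]
    exact_mod_cast h.trans (Nat.mul_le_mul_left _ hG) |>.trans_eq (mul_comm _ _)
  have hC : (0 : ℝ) < n.choose k := by exact_mod_cast Nat.choose_pos (by omega)
  rw [avgMarginalL1, inv_mul_le_iff₀ hC]
  linarith

end Bound

lemma tendsto_prod_Icc_sub_two_mul_div (k : ℕ) :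
    Tendsto (fun n : ℕ => ∏ j ∈ Icc 1 k, (((n : ℝ) - 2 * j) / n)) atTop (nhds 1) := by
  have hfactor (j : ℕ) : Tendsto (fun n : ℕ => ((n : ℝ) - 2 * j) / n) atTop (nhds 1) := by
    have h := tendsto_const_nhds (x := (1 : ℝ)).sub
      (tendsto_const_nhds (x := 2 * (j : ℝ)).div_atTop tendsto_natCast_atTop_atTop)
    rw [sub_zero] at h
    refine h.congr' ((eventually_ne_atTop 0).mono fun n hn => ?_)
    field_simp
  simpa using tendsto_finsetProd (Icc 1 k) fun j _ => hfactor j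

theorem dup_source_weakly_almost_iid_general
    {X : Type*} [Fintype X] [DecidableEq X]
    (p : X → ℝ) (hp0 : ∀ x, 0 ≤ p x) (hp1 : ∑ x, p x = 1)
    (k : ℕ) :
    (∀ n : ℕ, Even n → 2 * k < n →
      ((n.choose k : ℝ))⁻¹ *
          ∑ I ∈ Finset.powersetCard k (Finset.univ : Finset (Fin n)),
            (∑ a : {i : Fin n // i ∈ I} → X,
              |cMarginal (dupDist p n) I a - cIID {i : Fin n // i ∈ I} p a|)
        ≤ 2 * (1 - ∏ j ∈ Finset.Icc 1 k, (((n : ℝ) - 2 * j) / n))) ∧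
    Filter.Tendsto
      (fun n : ℕ => ((n.choose k : ℝ))⁻¹ *
        ∑ I ∈ Finset.powersetCard k (Finset.univ : Finset (Fin n)),
          (∑ a : {i : Fin n // i ∈ I} → X,
            |cMarginal (dupDist p n) I a - cIID {i : Fin n // i ∈ I} p a|))
      (Filter.atTop ⊓ Filter.principal {n : ℕ | Even n}) (nhds 0) := by
  refine ⟨fun n hn hkn => avgMarginalL1_dupDist_le hp0 hp1 hn hkn, ?_⟩
  have hbound : Tendsto (fun n : ℕ => 2 * (1 - ∏ j ∈ Icc 1 k, (((n : ℝ) - 2 * j) / n)))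
      atTop (nhds 0) := by
    simpa using ((tendsto_prod_Icc_sub_two_mul_div k).const_sub 1).const_mul 2
  refine tendsto_of_tendsto_of_tendsto_of_le_of_le' tendsto_const_nhds
    (hbound.mono_left inf_le_left) (Eventually.of_forall fun n => avgMarginalL1_nonneg p _ k) ?_
  rw [eventually_inf_principal]
  filter_upwards [eventually_gt_atTop (2 * k)] with n hkn hn
  exact avgMarginalL1_dupDist_le hp0 hp1 hn hkn

/-- For every fixed `k ≥ 1` and every even `n > 2k`, the average
ℓ¹ distance between the size-`k` marginals of the duplicated distribution `p̃ₙ` and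
`p^{×k}` is at most `2(1 − ∏_{j=1}^k (n−2j)/n)`; in particular it tends to `0` as
`n → ∞` along even `n`, so the duplicated source is weakly almost i.i.d. along `p`. -/
theorem dup_source_weakly_almost_iid
    {X : Type*} [Fintype X] [DecidableEq X]
    (p : X → ℝ) (hp0 : ∀ x, 0 ≤ p x) (hp1 : ∑ x, p x = 1)
    (k : ℕ) (hk : 1 ≤ k) :
    (∀ n : ℕ, Even n → 2 * k < n →
      ((n.choose k : ℝ))⁻¹ *
          ∑ I ∈ Finset.powersetCard k (Finset.univ : Finset (Fin n)),
            (∑ a : {i : Fin n // i ∈ I} → X,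
              |cMarginal (dupDist p n) I a - cIID {i : Fin n // i ∈ I} p a|)
        ≤ 2 * (1 - ∏ j ∈ Finset.Icc 1 k, (((n : ℝ) - 2 * j) / n))) ∧
    Filter.Tendsto
      (fun n : ℕ => ((n.choose k : ℝ))⁻¹ *
        ∑ I ∈ Finset.powersetCard k (Finset.univ : Finset (Fin n)),
          (∑ a : {i : Fin n // i ∈ I} → X,
            |cMarginal (dupDist p n) I a - cIID {i : Fin n // i ∈ I} p a|))
      (Filter.atTop ⊓ Filter.principal {n : ℕ | Even n}) (nhds 0) :=
  dup_source_weakly_almost_iid_general p hp0 hp1 k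

end AlmostIID
end
end

section
/- Let X be a finite set and p a probability distribution on X with Shannon entropy S(p) = −Σ_x p(x) ln p(x) > 0. For even n, define the duplicated distribution p̃_n on X^n by p̃_n(x₁,…,x_n) = ∏_{j odd, 1≤j≤n−1} p(x_j)·1[x_{j+1} = x_j], identified with a diagonal state on (ℂ^X)^{⊗n}. Then S(p̃_n) = (n/2)·S(p) for every even n, and consequently (p̃_n), indexed by even n, is not a Wasserstein almost i.i.d. source along p: it is not the case that lim_{even n→∞} (1/n)‖p̃_n − p^{×n}‖_{W1} = 0. -/
open scoped BigOperators ComplexOrder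
open Filter Matrix

noncomputable section

namespace AlmostIID

/-- The Shannon entropy `S(P) = −Σ_y P(y) ln P(y)` of a distribution. -/
def shannonEntropy {Y : Type*} [Fintype Y] (P : Y → ℝ) : ℝ :=
  -∑ y, P y * Real.log (P y)

section Aux
set_option linter.unusedSectionVars false

variable {X : Type*} [Fintype X] [DecidableEq X]

/-- The first coordinate of pair `j`. -/
def pFst {n : ℕ} (j : Fin (n / 2)) : Fin n := ⟨2 * j.val, by have := j.isLt; omega⟩

/-- The second coordinate of pair `j`. -/
def pSnd {n : ℕ} (j : Fin (n / 2)) : Fin n := ⟨2 * j.val + 1, by have := j.isLt; omega⟩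

lemma dupDist_eq (p : X → ℝ) (n : ℕ) (x : Fin n → X) :
    dupDist p n x
      = ∏ j : Fin (n / 2), p (x (pFst j)) * (if x (pSnd j) = x (pFst j) then 1 else 0) := rfl

lemma sum_pi_prod {κ : Type*} [Fintype κ] {ι : Type*} [Fintype ι] [DecidableEq ι]
    {R : Type*} [CommSemiring R] (F : ι → κ → R) :
    ∑ x : ι → κ, ∏ i, F i (x i) = ∏ i, ∑ t, F i t := by
  rw [Finset.prod_univ_sum, Fintype.piFinset_univ]

/-- The pairing equivalence for even `n`. -/
def pairEquiv (n : ℕ) (hn : n % 2 = 0) (κ : Type*) : (Fin n → κ) ≃ (Fin (n / 2) → κ × κ) where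
  toFun x j := (x (pFst j), x (pSnd j))
  invFun y i :=
    if i.val % 2 = 0 then (y ⟨i.val / 2, by have := i.isLt; omega⟩).1
    else (y ⟨i.val / 2, by have := i.isLt; omega⟩).2
  left_inv x := by
    funext i
    dsimp only
    by_cases h : i.val % 2 = 0
    · rw [if_pos h]
      exact congrArg x (Fin.ext (show 2 * (i.val / 2) = i.val by omega))
    · rw [if_neg h]
      exact congrArg x (Fin.ext (show 2 * (i.val / 2) + 1 = i.val by omega))
  right_inv y := by
    funext j
    have h1 : (pFst j).val % 2 = 0 := by simp only [pFst]; omega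
    have h2 : ¬ (pSnd j).val % 2 = 0 := by simp only [pSnd]; omega
    dsimp only
    refine Prod.ext ?_ ?_
    · show (if (pFst j).val % 2 = 0 then _ else _) = _
      rw [if_pos h1]
      exact congrArg (fun k => (y k).1) (Fin.ext (show (pFst j).val / 2 = j.val by
        simp only [pFst]; omega))
    · show (if (pSnd j).val % 2 = 0 then _ else _) = _
      rw [if_neg h2]
      exact congrArg (fun k => (y k).2) (Fin.ext (show (pSnd j).val / 2 = j.val by
        simp only [pSnd]; omega))

lemma sum_pairs {n : ℕ} (hn : n % 2 = 0) {R : Type*} [CommSemiring R]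
    (G : Fin (n / 2) → X → X → R) :
    ∑ x : Fin n → X, ∏ j, G j (x (pFst j)) (x (pSnd j)) = ∏ j, ∑ a : X, ∑ b : X, G j a b := by
  have h1 := Fintype.sum_equiv (pairEquiv n hn X)
    (fun x => ∏ j, G j (x (pFst j)) (x (pSnd j)))
    (fun y => ∏ j, G j (y j).1 (y j).2) (fun x => rfl)
  have h2 : ∑ y : Fin (n / 2) → X × X, ∏ j, G j (y j).1 (y j).2
      = ∏ j, ∑ ab : X × X, G j ab.1 ab.2 := sum_pi_prod (fun j (ab : X × X) => G j ab.1 ab.2)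
  rw [h1, h2]
  try exact Finset.prod_congr rfl fun j _ => Fintype.sum_prod_type _

/-- The index pairing equivalence for even `n`. -/
def pairIdxEquiv (n : ℕ) (hn : n % 2 = 0) : Fin (n / 2) × Fin 2 ≃ Fin n where
  toFun q := ⟨2 * q.1.val + q.2.val, by have := q.1.isLt; have := q.2.isLt; omega⟩
  invFun i := (⟨i.val / 2, by have := i.isLt; omega⟩, ⟨i.val % 2, by omega⟩)
  left_inv q := by
    have := q.2.isLt
    refine Prod.ext (Fin.ext ?_) (Fin.ext ?_)
    · show (2 * q.1.val + q.2.val) / 2 = q.1.val; omega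
    · show (2 * q.1.val + q.2.val) % 2 = q.2.val; omega
  right_inv i := Fin.ext (show 2 * (i.val / 2) + i.val % 2 = i.val by omega)

lemma prod_pairs {n : ℕ} (hn : n % 2 = 0) {R : Type*} [CommMonoid R] (f : Fin n → R) :
    ∏ i, f i = ∏ j : Fin (n / 2), (f (pFst j) * f (pSnd j)) := by
  have h1 := Fintype.prod_equiv (pairIdxEquiv n hn)
    (fun q => f (pairIdxEquiv n hn q)) f (fun q => rfl)
  rw [← h1, Fintype.prod_prod_type]
  refine Finset.prod_congr rfl fun j _ => ?_
  rw [Fin.prod_univ_two]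
  have e0 : (pairIdxEquiv n hn (j, 0)) = pFst j :=
    Fin.ext (show 2 * j.val + (0 : Fin 2).val = 2 * j.val by simp)
  have e1 : (pairIdxEquiv n hn (j, 1)) = pSnd j :=
    Fin.ext (show 2 * j.val + (1 : Fin 2).val = 2 * j.val + 1 by simp)
  rw [e0, e1]

/-- The interpolating distributions: pairs below `k` are duplicated, the rest i.i.d. -/
def Bdist (p : X → ℝ) (n k : ℕ) : (Fin n → X) → ℝ := fun x =>
  ∏ j : Fin (n / 2),
    if j.val < k then p (x (pFst j)) * (if x (pSnd j) = x (pFst j) then 1 else 0)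
    else p (x (pFst j)) * p (x (pSnd j))

lemma Bdist_nonneg {p : X → ℝ} (hp0 : ∀ x, 0 ≤ p x) (n k : ℕ) (x : Fin n → X) :
    0 ≤ Bdist p n k x := by
  refine Finset.prod_nonneg fun j _ => ?_
  split
  · exact mul_nonneg (hp0 _) (by split <;> norm_num)
  · exact mul_nonneg (hp0 _) (hp0 _)

lemma Bdist_top (p : X → ℝ) (n : ℕ) : Bdist p n (n / 2) = dupDist p n := by
  funext x
  rw [dupDist_eq]
  exact Finset.prod_congr rfl fun j _ => if_pos j.isLt

lemma Bdist_zero {n : ℕ} (hn : n % 2 = 0) (p : X → ℝ) (x : Fin n → X) :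
    Bdist p n 0 x = ∏ i, p (x i) := by
  refine (Finset.prod_congr rfl fun j _ => if_neg (by omega)).trans ?_
  exact (prod_pairs hn (fun i => p (x i))).symm

lemma Bdist_sum_one {p : X → ℝ} (hp1 : ∑ a, p a = 1) {n : ℕ} (hn : n % 2 = 0) (k : ℕ) :
    ∑ x : Fin n → X, Bdist p n k x = 1 := by
  refine (sum_pairs hn
    (fun j a b => if j.val < k then p a * (if b = a then 1 else 0) else p a * p b)).trans ?_
  refine Finset.prod_eq_one fun j _ => ?_
  split
  · have hA : ∀ a : X, ∑ b : X, p a * (if b = a then (1:ℝ) else 0) = p a := by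
      intro a
      rw [← Finset.mul_sum, Finset.sum_ite_eq' Finset.univ a (fun _ => (1:ℝ)),
        if_pos (Finset.mem_univ a), mul_one]
    exact (Finset.sum_congr rfl fun a _ => hA a).trans hp1
  · simp only [← Finset.mul_sum, hp1, mul_one]
    try exact hp1

lemma dupDist_sum_one {p : X → ℝ} (hp1 : ∑ a, p a = 1) {n : ℕ} (hn : n % 2 = 0) :
    ∑ x : Fin n → X, dupDist p n x = 1 := by
  rw [← Bdist_top]; exact Bdist_sum_one hp1 hn _

/-- Merge of values on `I` and on its complement. -/
def mrg {κ : Type*} {n : ℕ} (I : Finset (Fin n)) (a : {i : Fin n // i ∈ I} → κ)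
    (f : {i : Fin n // i ∉ I} → κ) : Fin n → κ :=
  fun i => if h : i ∈ I then a ⟨i, h⟩ else f ⟨i, h⟩

lemma sum_merge {n : ℕ} (I : Finset (Fin n)) {R : Type*} [AddCommMonoid R]
    (F : (Fin n → X) → R) :
    ∑ x : Fin n → X, F x
      = ∑ a : {i : Fin n // i ∈ I} → X, ∑ f : {i : Fin n // i ∉ I} → X, F (mrg I a f) := by
  refine (Fintype.sum_equiv (Equiv.piEquivPiSubtypeProd (· ∈ I) fun _ => X) _
    (fun q => F (mrg I q.1 q.2)) fun x => ?_).trans (Fintype.sum_prod_type _)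
  refine congrArg F (funext fun i => ?_)
  by_cases h : i ∈ I <;>
    simp [mrg, Equiv.piEquivPiSubtypeProd, h]

lemma marginal_diagonal {n : ℕ} (P : (Fin n → X) → ℂ) (I : Finset (Fin n)) :
    marginal (Matrix.diagonal P) I
      = Matrix.diagonal fun a => ∑ f : {i : Fin n // i ∉ I} → X, P (mrg I a f) := by
  funext a b
  by_cases hab : a = b
  · subst hab
    show (∑ f : {i : Fin n // i ∉ I} → X, Matrix.diagonal P (mrg I a f) (mrg I a f)) = _
    rw [Matrix.diagonal_apply_eq]
    exact Finset.sum_congr rfl fun f _ => Matrix.diagonal_apply_eq _ _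
  · show (∑ f : {i : Fin n // i ∉ I} → X, Matrix.diagonal P (mrg I a f) (mrg I b f)) = _
    rw [Matrix.diagonal_apply_ne _ hab]
    refine Finset.sum_eq_zero fun f _ => Matrix.diagonal_apply_ne _ fun hEq => hab ?_
    funext i'
    have h2 := congrFun hEq i'.1
    simpa [mrg, dif_pos i'.2] using h2

lemma sum_over_site {n : ℕ} (i : Fin n) {R : Type*} [AddCommMonoid R]
    (F : (Fin n → X) → R) (a : {i' : Fin n // i' ∈ ({i}ᶜ : Finset (Fin n))} → X) :
    ∑ f : {i' : Fin n // i' ∉ ({i}ᶜ : Finset (Fin n))} → X, F (mrg _ a f)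
      = ∑ t : X, F (mrg ({i}ᶜ : Finset (Fin n)) a fun _ => t) := by
  have hmem : i ∉ ({i}ᶜ : Finset (Fin n)) := by simp
  refine Fintype.sum_equiv
    ⟨fun f => f ⟨i, hmem⟩, fun t _ => t, fun f => ?_, fun t => rfl⟩ _ _ fun f => ?_
  · funext i'
    obtain ⟨i', hi'⟩ := i'
    have hii : i' = i := by simpa using hi'
    subst hii
    rfl
  · refine congrArg F (funext fun i' => ?_)
    unfold mrg
    by_cases h : i' ∈ ({i}ᶜ : Finset (Fin n))
    · rw [dif_pos h, dif_pos h]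
    · rw [dif_neg h, dif_neg h]
      have hii : i' = i := by simpa using h
      subst hii
      rfl

/-- Diagonal (classical) state from a distribution. -/
def diagC {n : ℕ} (P : (Fin n → X) → ℝ) : Matrix (Fin n → X) (Fin n → X) ℂ :=
  Matrix.diagonal fun x => (P x : ℂ)

lemma isState_diagC {n : ℕ} {P : (Fin n → X) → ℝ} (h0 : ∀ x, 0 ≤ P x)
    (h1 : ∑ x, P x = 1) : IsState (diagC P) := by
  constructor
  · rw [diagC, Matrix.posSemidef_diagonal_iff]
    intro x
    exact Complex.zero_le_real.mpr (h0 x)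
  · rw [diagC, Matrix.trace_diagonal]
    exact_mod_cast h1

lemma pair_ne {n : ℕ} (i : Fin n) (hj : i.val / 2 < n / 2) (j' : Fin (n / 2))
    (h : j' ≠ (⟨i.val / 2, hj⟩ : Fin (n / 2))) : pFst j' ≠ i ∧ pSnd j' ≠ i := by
  have hval : j'.val ≠ i.val / 2 := fun hc => h (Fin.ext hc)
  constructor <;> intro hc <;> apply hval <;>
    · have hv := congrArg Fin.val hc
      simp only [pFst, pSnd] at hv
      omega

lemma nonempty_of_sum_one {p : X → ℝ} (hp1 : ∑ a, p a = 1) : Nonempty X := by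
  by_contra h
  rw [not_nonempty_iff] at h
  rw [Finset.univ_eq_empty, Finset.sum_empty] at hp1
  norm_num at hp1

lemma Bdist_marg_step {p : X → ℝ} (hp1 : ∑ a, p a = 1) {n : ℕ} (hn : n % 2 = 0) (i : Fin n)
    (a : {i' : Fin n // i' ∈ ({i}ᶜ : Finset (Fin n))} → X) :
    ∑ t : X, Bdist p n (i.val / 2 + 1) (mrg ({i}ᶜ : Finset (Fin n)) a fun _ => t)
      = ∑ t : X, Bdist p n (i.val / 2) (mrg ({i}ᶜ : Finset (Fin n)) a fun _ => t) := by
  obtain ⟨t₀⟩ := nonempty_of_sum_one hp1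
  set xt : X → Fin n → X := fun t => mrg ({i}ᶜ : Finset (Fin n)) a fun _ => t with hxt
  have hxt_ne : ∀ (t t' : X) (i' : Fin n), i' ≠ i → xt t i' = xt t' i' := by
    intro t t' i' h
    have h' : i' ∈ ({i}ᶜ : Finset (Fin n)) := by simpa using h
    show (if h : i' ∈ ({i}ᶜ : Finset (Fin n)) then a ⟨i', h⟩ else t)
      = (if h : i' ∈ ({i}ᶜ : Finset (Fin n)) then a ⟨i', h⟩ else t')
    rw [dif_pos h', dif_pos h']
  have hxt_i : ∀ t, xt t i = t := by
    intro t
    have h' : i ∉ ({i}ᶜ : Finset (Fin n)) := by simp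
    show (if h : i ∈ ({i}ᶜ : Finset (Fin n)) then a ⟨i, h⟩ else t) = t
    rw [dif_neg h']
  have hj : i.val / 2 < n / 2 := by have := i.isLt; omega
  set jp : Fin (n / 2) := ⟨i.val / 2, hj⟩ with hjp
  -- the common part over the other pairs
  set C : ℝ := ∏ j' ∈ Finset.univ.erase jp,
    (if j'.val < i.val / 2 then p (xt t₀ (pFst j')) * (if xt t₀ (pSnd j') = xt t₀ (pFst j') then 1 else 0)
     else p (xt t₀ (pFst j')) * p (xt t₀ (pSnd j'))) with hC
  have herase : ∀ (K : ℕ), (K = i.val / 2 ∨ K = i.val / 2 + 1) → ∀ t : X,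
      (∏ j' ∈ Finset.univ.erase jp,
        (if j'.val < K then p (xt t (pFst j')) * (if xt t (pSnd j') = xt t (pFst j') then 1 else 0)
         else p (xt t (pFst j')) * p (xt t (pSnd j')))) = C := by
    intro K hK t
    refine Finset.prod_congr rfl fun j' hj' => ?_
    have hne' := (Finset.mem_erase.mp hj').1
    obtain ⟨hf, hs⟩ := pair_ne i hj j' hne'
    rw [hxt_ne t t₀ _ hf, hxt_ne t t₀ _ hs]
    have hvne : j'.val ≠ i.val / 2 := fun hc => hne' (Fin.ext hc)
    have hcond : (j'.val < K) ↔ (j'.val < i.val / 2) := by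
      rcases hK with h | h <;> subst h
      · rfl
      · constructor <;> intro <;> omega
    simp only [hcond]
  have hsplitform : ∀ (K : ℕ) (t : X), Bdist p n K (xt t)
      = (if jp.val < K then p (xt t (pFst jp)) * (if xt t (pSnd jp) = xt t (pFst jp) then 1 else 0)
         else p (xt t (pFst jp)) * p (xt t (pSnd jp)))
        * ∏ j' ∈ Finset.univ.erase jp,
          (if j'.val < K then p (xt t (pFst j')) * (if xt t (pSnd j') = xt t (pFst j') then 1 else 0)
           else p (xt t (pFst j')) * p (xt t (pSnd j'))) := by
    intro K t
    exact (Finset.mul_prod_erase Finset.univ _ (Finset.mem_univ jp)).symm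
  have hL : ∑ t : X, Bdist p n (i.val / 2 + 1) (xt t)
      = (∑ t : X, p (xt t (pFst jp)) * (if xt t (pSnd jp) = xt t (pFst jp) then 1 else 0)) * C := by
    rw [Finset.sum_mul]
    refine Finset.sum_congr rfl fun t _ => ?_
    rw [hsplitform (i.val / 2 + 1) t, herase _ (Or.inr rfl) t,
      if_pos (show (⟨i.val / 2, hj⟩ : Fin (n / 2)).val < i.val / 2 + 1 from Nat.lt_succ_self _)]
  have hR : ∑ t : X, Bdist p n (i.val / 2) (xt t)
      = (∑ t : X, p (xt t (pFst jp)) * p (xt t (pSnd jp))) * C := by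
    rw [Finset.sum_mul]
    refine Finset.sum_congr rfl fun t _ => ?_
    rw [hsplitform (i.val / 2) t, herase _ (Or.inl rfl) t,
      if_neg (show ¬ (⟨i.val / 2, hj⟩ : Fin (n / 2)).val < i.val / 2 from lt_irrefl _)]
  rw [hL, hR]
  congr 1
  -- main step: the pair containing `i`
  by_cases hpar : i.val % 2 = 0
  · have hfst : pFst jp = i := Fin.ext (show 2 * (i.val / 2) = i.val by omega)
    have hsnd : pSnd jp ≠ i := by
      intro hc
      have hv : 2 * (i.val / 2) + 1 = i.val := congrArg Fin.val hc
      omega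
    have h1 : ∀ t, xt t (pFst jp) = t := fun t => by rw [hfst]; exact hxt_i t
    have h2 : ∀ t, xt t (pSnd jp) = xt t₀ (pSnd jp) := fun t => hxt_ne _ _ _ hsnd
    calc ∑ t : X, p (xt t (pFst jp)) * (if xt t (pSnd jp) = xt t (pFst jp) then (1:ℝ) else 0)
        = ∑ t : X, (if xt t₀ (pSnd jp) = t then p t else 0) := by
          refine Finset.sum_congr rfl fun t _ => ?_
          rw [h1 t, h2 t, mul_ite, mul_one, mul_zero]
      _ = p (xt t₀ (pSnd jp)) := by
          rw [Finset.sum_ite_eq Finset.univ _ p, if_pos (Finset.mem_univ _)]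
      _ = ∑ t : X, p (xt t (pFst jp)) * p (xt t (pSnd jp)) := by
          rw [show ∑ t : X, p (xt t (pFst jp)) * p (xt t (pSnd jp))
              = ∑ t : X, p t * p (xt t₀ (pSnd jp)) from
            Finset.sum_congr rfl fun t _ => by rw [h1 t, h2 t]]
          rw [← Finset.sum_mul, hp1, one_mul]
  · have hsnd : pSnd jp = i := Fin.ext (show 2 * (i.val / 2) + 1 = i.val by omega)
    have hfst : pFst jp ≠ i := by
      intro hc
      have hv : 2 * (i.val / 2) = i.val := congrArg Fin.val hc
      omega
    have h1 : ∀ t, xt t (pSnd jp) = t := fun t => by rw [hsnd]; exact hxt_i t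
    have h2 : ∀ t, xt t (pFst jp) = xt t₀ (pFst jp) := fun t => hxt_ne _ _ _ hfst
    calc ∑ t : X, p (xt t (pFst jp)) * (if xt t (pSnd jp) = xt t (pFst jp) then (1:ℝ) else 0)
        = ∑ t : X, (if t = xt t₀ (pFst jp) then p (xt t₀ (pFst jp)) else 0) := by
          refine Finset.sum_congr rfl fun t _ => ?_
          rw [h1 t, h2 t, mul_ite, mul_one, mul_zero]
      _ = p (xt t₀ (pFst jp)) := by
          rw [Finset.sum_ite_eq' Finset.univ _ (fun _ => p (xt t₀ (pFst jp))),
            if_pos (Finset.mem_univ _)]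
      _ = ∑ t : X, p (xt t (pFst jp)) * p (xt t (pSnd jp)) := by
          rw [show ∑ t : X, p (xt t (pFst jp)) * p (xt t (pSnd jp))
              = ∑ t : X, p (xt t₀ (pFst jp)) * p t from
            Finset.sum_congr rfl fun t _ => by rw [h1 t, h2 t]]
          rw [← Finset.mul_sum, hp1, mul_one]

lemma marg_mat_eq {p : X → ℝ} (hp1 : ∑ a, p a = 1) {n : ℕ} (hn : n % 2 = 0) (i : Fin n) :
    marginal (diagC (Bdist p n (i.val / 2 + 1))) ({i}ᶜ : Finset (Fin n))
      = marginal (diagC (Bdist p n (i.val / 2))) ({i}ᶜ : Finset (Fin n)) := by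
  rw [diagC, diagC, marginal_diagonal, marginal_diagonal]
  refine congrArg Matrix.diagonal (funext fun a => ?_)
  refine (sum_over_site i (fun x => ((Bdist p n (i.val / 2 + 1) x : ℝ) : ℂ)) a).trans ?_
  refine Eq.trans ?_ (sum_over_site i (fun x => ((Bdist p n (i.val / 2) x : ℝ) : ℂ)) a).symm
  exact_mod_cast Bdist_marg_step hp1 hn i a

/-- The indicator that pair `j` matches. -/
def indJ {n : ℕ} (j : Fin (n / 2)) (x : Fin n → X) : ℝ :=
  if x (pSnd j) = x (pFst j) then 1 else 0

lemma indJ_nonneg {n : ℕ} (j : Fin (n / 2)) (x : Fin n → X) : 0 ≤ indJ j x := by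
  rw [indJ]; split <;> norm_num

lemma indJ_le_one {n : ℕ} (j : Fin (n / 2)) (x : Fin n → X) : indJ j x ≤ 1 := by
  rw [indJ]; split <;> norm_num

/-- The matching-pairs observable. -/
def hObs {n : ℕ} (x : Fin n → X) : ℝ := ∑ j, indJ j x

/-- The matching-pairs functional on matrices. -/
def Phi {n : ℕ} (M : Matrix (Fin n → X) (Fin n → X) ℂ) : ℝ :=
  ∑ x, hObs x * (M x x).re

lemma Phi_diagC {n : ℕ} (P : (Fin n → X) → ℝ) :
    Phi (diagC P) = ∑ x, hObs x * P x := by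
  refine Finset.sum_congr rfl fun x _ => ?_
  rw [diagC, Matrix.diagonal_apply_eq, Complex.ofReal_re]

lemma Phi_Q {p : X → ℝ} (hp1 : ∑ a, p a = 1) {n : ℕ} (hn : n % 2 = 0) :
    Phi (diagC (dupDist p n)) = ((n / 2 : ℕ) : ℝ) := by
  rw [Phi_diagC]
  have hpt : ∀ x : Fin n → X, hObs x * dupDist p n x = ((n / 2 : ℕ) : ℝ) * dupDist p n x := by
    intro x
    by_cases hQ : dupDist p n x = 0
    · rw [hQ, mul_zero, mul_zero]
    · congr 1
      have hfac := Finset.prod_ne_zero_iff.mp (fun h => hQ ((dupDist_eq p n x).trans h))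
      have hone : ∀ j : Fin (n / 2), indJ j x = 1 := by
        intro j
        have hfj := hfac j (Finset.mem_univ j)
        have hcond : x (pSnd j) = x (pFst j) := by
          by_contra hc
          exact hfj (by rw [if_neg hc, mul_zero])
        rw [indJ, if_pos hcond]
      rw [hObs]
      rw [Finset.sum_congr rfl fun j _ => hone j]
      simp
  rw [Finset.sum_congr rfl fun x _ => hpt x, ← Finset.mul_sum, dupDist_sum_one hp1 hn, mul_one]

lemma Phi_R {p : X → ℝ} (hp1 : ∑ a, p a = 1) {n : ℕ} (hn : n % 2 = 0) :
    Phi (diagC (fun x : Fin n → X => ∏ i', p (x i')))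
      = ((n / 2 : ℕ) : ℝ) * ∑ a, p a ^ 2 := by
  rw [Phi_diagC]
  have h1 : ∀ x : Fin n → X, hObs x * (∏ i', p (x i'))
      = ∑ j, indJ j x * ∏ i', p (x i') := by
    intro x; rw [hObs, Finset.sum_mul]
  rw [Finset.sum_congr rfl fun x _ => h1 x, Finset.sum_comm]
  have h2 : ∀ j : Fin (n / 2), (∑ x : Fin n → X, indJ j x * ∏ i', p (x i')) = ∑ a, p a ^ 2 := by
    intro j
    have hpt : ∀ x : Fin n → X, indJ j x * ∏ i', p (x i')
        = ∏ j' : Fin (n / 2), ((p (x (pFst j')) * p (x (pSnd j'))) *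
            (if j' = j then (if x (pSnd j') = x (pFst j') then (1:ℝ) else 0) else 1)) := by
      intro x
      rw [Finset.prod_mul_distrib, Finset.prod_ite_eq' Finset.univ j
        (fun j' => if x (pSnd j') = x (pFst j') then (1:ℝ) else 0),
        if_pos (Finset.mem_univ j), ← prod_pairs hn (fun i' => p (x i')), indJ]
      exact mul_comm _ _
    rw [Finset.sum_congr rfl fun x _ => hpt x]
    refine Eq.trans (sum_pairs hn (fun j' a b => (p a * p b) *
      (if j' = j then (if b = a then (1:ℝ) else 0) else 1))) ?_
    have h3 : ∀ j' : Fin (n / 2),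
        (∑ a : X, ∑ b : X, (p a * p b) * (if j' = j then (if b = a then (1:ℝ) else 0) else 1))
          = if j' = j then ∑ a, p a ^ 2 else 1 := by
      intro j'
      by_cases h : j' = j
      · subst h
        simp only [eq_self_iff_true, if_true]
        refine Finset.sum_congr rfl fun a _ => ?_
        have hb : ∀ b : X, (p a * p b) * (if b = a then (1:ℝ) else 0)
            = if b = a then p a * p b else 0 := fun b => by
          rw [mul_ite, mul_one, mul_zero]
        rw [Finset.sum_congr rfl fun b _ => hb b,
          Finset.sum_ite_eq' Finset.univ a fun b => p a * p b, if_pos (Finset.mem_univ a)]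
        ring
      · rw [if_neg h]
        simp [if_neg h, ← Finset.mul_sum, hp1]
    rw [Finset.prod_congr rfl fun j' _ => h3 j',
      Finset.prod_ite_eq' Finset.univ j (fun _ => ∑ a, p a ^ 2), if_pos (Finset.mem_univ j)]
  rw [Finset.sum_congr rfl fun j _ => h2 j]
  simp [Finset.sum_const, Finset.card_univ, nsmul_eq_mul]

lemma Phi_sum {n : ℕ} {ι : Type*} (s : Finset ι)
    (M : ι → Matrix (Fin n → X) (Fin n → X) ℂ) :
    Phi (∑ i ∈ s, M i) = ∑ i ∈ s, Phi (M i) := by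
  unfold Phi
  have h1 : ∀ x : Fin n → X, hObs x * ((∑ i ∈ s, M i) x x).re
      = ∑ i ∈ s, hObs x * (M i x x).re := by
    intro x
    rw [Matrix.sum_apply, Complex.re_sum, Finset.mul_sum]
  rw [Finset.sum_congr rfl fun x _ => h1 x]
  exact Finset.sum_comm

lemma Phi_smul {n : ℕ} (c : ℝ) (M : Matrix (Fin n → X) (Fin n → X) ℂ) :
    Phi (c • M) = c * Phi M := by
  rw [Phi, Phi, Finset.mul_sum]
  refine Finset.sum_congr rfl fun x _ => ?_
  rw [Matrix.smul_apply, Complex.smul_re, smul_eq_mul]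
  ring

lemma Phi_sub {n : ℕ} (A B : Matrix (Fin n → X) (Fin n → X) ℂ) :
    Phi (A - B) = Phi A - Phi B := by
  rw [Phi, Phi, Phi, ← Finset.sum_sub_distrib]
  refine Finset.sum_congr rfl fun x _ => ?_
  rw [Matrix.sub_apply, Complex.sub_re, mul_sub]

lemma state_diag_re_nonneg {n : ℕ} {M : Matrix (Fin n → X) (Fin n → X) ℂ}
    (h : M.PosSemidef) (x : Fin n → X) : 0 ≤ (M x x).re := by
  have := h.re_dotProduct_nonneg (Pi.single x 1)
  simpa [dotProduct, Matrix.mulVec, Pi.single_apply] using this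

lemma state_diag_sum {n : ℕ} {M : Matrix (Fin n → X) (Fin n → X) ℂ}
    (h : IsState M) : ∑ x, (M x x).re = 1 := by
  have h2 := congrArg Complex.re h.2
  simpa [Matrix.trace, Matrix.diag, Complex.re_sum] using h2

lemma Phi_site_bound {n : ℕ} (hn : n % 2 = 0) [Nonempty X] (i : Fin n)
    {τ η : Matrix (Fin n → X) (Fin n → X) ℂ} (hτ : IsState τ) (hη : IsState η)
    (hm : marginal τ ({i}ᶜ : Finset (Fin n)) = marginal η ({i}ᶜ : Finset (Fin n))) :
    |Phi τ - Phi η| ≤ 1 := by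
  have hj : i.val / 2 < n / 2 := by have := i.isLt; omega
  set jp : Fin (n / 2) := ⟨i.val / 2, hj⟩ with hjp
  set Rst : (Fin n → X) → ℝ := fun x => ∑ j' ∈ Finset.univ.erase jp, indJ j' x with hRst
  have hPhi : ∀ M : Matrix (Fin n → X) (Fin n → X) ℂ,
      Phi M = (∑ x, indJ jp x * (M x x).re) + ∑ x, Rst x * (M x x).re := by
    intro M
    rw [Phi, ← Finset.sum_add_distrib]
    refine Finset.sum_congr rfl fun x _ => ?_
    rw [hObs, ← Finset.add_sum_erase Finset.univ (fun j => indJ j x) (Finset.mem_univ jp),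
      add_mul]
  have hRst_indep : ∀ x y : Fin n → X, (∀ i' : Fin n, i' ≠ i → x i' = y i') → Rst x = Rst y := by
    intro x y hxy
    refine Finset.sum_congr rfl fun j' hj' => ?_
    obtain ⟨hf, hs⟩ := pair_ne i hj j' (Finset.mem_erase.mp hj').1
    rw [indJ, indJ, hxy _ hf, hxy _ hs]
  have hrest : ∀ M : Matrix (Fin n → X) (Fin n → X) ℂ,
      ∑ x, Rst x * (M x x).re
        = ∑ a : {i' : Fin n // i' ∈ ({i}ᶜ : Finset (Fin n))} → X,
            Rst (mrg _ a fun _ => Classical.arbitrary X)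
              * ((marginal M ({i}ᶜ : Finset (Fin n))) a a).re := by
    intro M
    rw [sum_merge ({i}ᶜ : Finset (Fin n)) (fun x => Rst x * (M x x).re)]
    refine Finset.sum_congr rfl fun a _ => ?_
    have hconst : ∀ f, Rst (mrg ({i}ᶜ : Finset (Fin n)) a f)
        = Rst (mrg _ a fun _ => Classical.arbitrary X) := by
      intro f
      refine hRst_indep _ _ fun i' hi' => ?_
      have h' : i' ∈ ({i}ᶜ : Finset (Fin n)) := by simpa using hi'
      show (if h : i' ∈ ({i}ᶜ : Finset (Fin n)) then a ⟨i', h⟩ else f ⟨i', h⟩)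
        = (if h : i' ∈ ({i}ᶜ : Finset (Fin n)) then a ⟨i', h⟩ else Classical.arbitrary X)
      rw [dif_pos h', dif_pos h']
    rw [Finset.sum_congr rfl fun f _ => by rw [hconst f], ← Finset.mul_sum]
    congr 1
    exact (Complex.re_sum _ _).symm
  have heq : ∑ x, Rst x * (τ x x).re = ∑ x, Rst x * (η x x).re := by
    rw [hrest, hrest, hm]
  have hIb : ∀ M : Matrix (Fin n → X) (Fin n → X) ℂ, IsState M →
      0 ≤ (∑ x, indJ jp x * (M x x).re) ∧ (∑ x, indJ jp x * (M x x).re) ≤ 1 := by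
    intro M hM
    constructor
    · exact Finset.sum_nonneg fun x _ =>
        mul_nonneg (indJ_nonneg jp x) (state_diag_re_nonneg hM.1 x)
    · refine le_trans (Finset.sum_le_sum fun x _ => ?_) (le_of_eq (state_diag_sum hM))
      exact mul_le_of_le_one_left (state_diag_re_nonneg hM.1 x) (indJ_le_one jp x)
  obtain ⟨hτ0, hτ1⟩ := hIb τ hτ
  obtain ⟨hη0, hη1⟩ := hIb η hη
  rw [hPhi τ, hPhi η, heq, abs_le]
  constructor <;> linarith

lemma W1_lower {p : X → ℝ} (hp0 : ∀ x, 0 ≤ p x) (hp1 : ∑ a, p a = 1) {n : ℕ}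
    (hn : n % 2 = 0) :
    ((n / 2 : ℕ) : ℝ) * (1 - ∑ a, p a ^ 2)
      ≤ W1 (Matrix.diagonal (fun x : Fin n → X => (dupDist p n x : ℂ)) -
            Matrix.diagonal (fun x : Fin n → X => ∏ i', (p (x i') : ℂ))) := by
  have hne : Nonempty X := nonempty_of_sum_one hp1
  have hQcast : Matrix.diagonal (fun x : Fin n → X => (dupDist p n x : ℂ))
      = diagC (dupDist p n) := rfl
  have hRcast : Matrix.diagonal (fun x : Fin n → X => ∏ i', (p (x i') : ℂ))
      = diagC (fun x : Fin n → X => ∏ i', p (x i')) := by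
    rw [diagC]
    refine congrArg Matrix.diagonal (funext fun x => ?_)
    push_cast
    rfl
  -- the explicit decomposition showing the defining set is nonempty
  have hmem : (∑ i : Fin n, if i.val % 2 = 1 then (1:ℝ) else 0) ∈ { w : ℝ |
      ∃ (c : Fin n → ℝ) (τ η : Fin n → Matrix (Fin n → X) (Fin n → X) ℂ),
        (∀ i, 0 ≤ c i) ∧ (∀ i, IsState (τ i)) ∧ (∀ i, IsState (η i)) ∧
        (∀ i, marginal (τ i) ({i}ᶜ : Finset (Fin n)) = marginal (η i) ({i}ᶜ : Finset (Fin n))) ∧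
        (Matrix.diagonal (fun x : Fin n → X => (dupDist p n x : ℂ)) -
            Matrix.diagonal (fun x : Fin n → X => ∏ i', (p (x i') : ℂ)))
          = ∑ i, c i • (τ i - η i) ∧
        (∑ i : Fin n, if i.val % 2 = 1 then (1:ℝ) else 0) = ∑ i, c i } := by
    refine ⟨fun i => if i.val % 2 = 1 then (1:ℝ) else 0,
      fun i => diagC (Bdist p n (i.val / 2 + 1)),
      fun i => diagC (Bdist p n (i.val / 2)),
      fun i => by dsimp only; split <;> norm_num,
      fun i => isState_diagC (Bdist_nonneg hp0 n _) (Bdist_sum_one hp1 hn _),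
      fun i => isState_diagC (Bdist_nonneg hp0 n _) (Bdist_sum_one hp1 hn _),
      fun i => marg_mat_eq hp1 hn i, ?_, rfl⟩
    have hsimp : ∀ i : Fin n, (if i.val % 2 = 1 then (1:ℝ) else 0) •
        (diagC (Bdist p n (i.val / 2 + 1)) - diagC (Bdist p n (i.val / 2)))
        = if i.val % 2 = 1 then
            (diagC (Bdist p n (i.val / 2 + 1)) - diagC (Bdist p n (i.val / 2))) else 0 := by
      intro i; split <;> simp
    refine Eq.symm ?_
    refine Eq.trans (Finset.sum_congr rfl fun i _ => hsimp i) ?_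
    refine Eq.trans (Finset.sum_filter (fun i : Fin n => i.val % 2 = 1)
      (fun i : Fin n => diagC (Bdist p n (i.val / 2 + 1)) - diagC (Bdist p n (i.val / 2)))).symm ?_
    refine Eq.trans (Finset.sum_nbij'
      (g := fun j : Fin (n / 2) => diagC (Bdist p n (j.val + 1)) - diagC (Bdist p n j.val))
      (t := (Finset.univ : Finset (Fin (n / 2))))
      (fun i : Fin n => (⟨i.val / 2, by have := i.isLt; omega⟩ : Fin (n / 2)))
      (fun j : Fin (n / 2) => pSnd j)
      (fun i _ => Finset.mem_univ _)
      (fun j _ => by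
        simp only [Finset.mem_filter, Finset.mem_univ, true_and]
        show (2 * j.val + 1) % 2 = 1
        omega)
      (fun i hi => Fin.ext (show 2 * (i.val / 2) + 1 = i.val by
        have h2 := (Finset.mem_filter.mp hi).2
        omega))
      (fun j _ => Fin.ext (show (2 * j.val + 1) / 2 = j.val by omega))
      (fun i _ => rfl)) ?_
    refine Eq.trans (Fin.sum_univ_eq_sum_range
      (fun k => diagC (Bdist p n (k + 1)) - diagC (Bdist p n k)) (n / 2)) ?_
    refine Eq.trans (Finset.sum_range_sub (fun k => diagC (Bdist p n k)) (n / 2)) ?_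
    rw [Bdist_top p n, hRcast]
    congr 1
    exact congrArg Matrix.diagonal (funext fun x => by rw [Bdist_zero hn])
  refine le_csInf ⟨_, hmem⟩ ?_
  rintro w ⟨c, τ, η, hc, hτ, hη, hmarg, hXeq, rfl⟩
  have hPhiX : Phi (Matrix.diagonal (fun x : Fin n → X => (dupDist p n x : ℂ)) -
      Matrix.diagonal (fun x : Fin n → X => ∏ i', (p (x i') : ℂ)))
      = ((n / 2 : ℕ) : ℝ) * (1 - ∑ a, p a ^ 2) := by
    rw [hQcast, hRcast, Phi_sub, Phi_Q hp1 hn, Phi_R hp1 hn]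
    ring
  rw [← hPhiX, hXeq]
  have hlin : Phi (∑ i : Fin n, c i • (τ i - η i))
      = ∑ i : Fin n, c i * (Phi (τ i) - Phi (η i)) := by
    rw [Phi_sum]
    exact Finset.sum_congr rfl fun i _ => by rw [Phi_smul, Phi_sub]
  rw [hlin]
  refine Finset.sum_le_sum fun i _ => ?_
  have hb := Phi_site_bound hn i (hτ i) (hη i) (hmarg i)
  have h1 := (abs_le.mp hb).2
  calc c i * (Phi (τ i) - Phi (η i)) ≤ c i * 1 :=
        mul_le_mul_of_nonneg_left h1 (hc i)
    _ = c i := mul_one _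

lemma dup_support_sum (p : X → ℝ) {n : ℕ} (hn : n % 2 = 0) (F : ℝ → ℝ) (hF : F 0 = 0) :
    ∑ x : Fin n → X, F (dupDist p n x) = ∑ y : Fin (n / 2) → X, F (∏ j, p (y j)) := by
  classical
  have hstep : ∑ x : Fin n → X, F (dupDist p n x)
      = ∑ x ∈ Finset.univ.filter
          (fun x : Fin n → X => ∀ j : Fin (n / 2), x (pSnd j) = x (pFst j)),
          F (dupDist p n x) := by
    refine (Finset.sum_filter_of_ne fun x _ hne => ?_).symm
    by_contra hc
    push_neg at hc
    obtain ⟨j, hj⟩ := hc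
    refine hne ?_
    rw [dupDist_eq, Finset.prod_eq_zero (Finset.mem_univ j) (by rw [if_neg hj, mul_zero]), hF]
  rw [hstep]
  refine Finset.sum_nbij'
    (g := fun y : Fin (n / 2) → X => F (∏ j, p (y j)))
    (t := (Finset.univ : Finset (Fin (n / 2) → X)))
    (fun x (j : Fin (n / 2)) => x (pFst j))
    (fun y (i' : Fin n) => y ⟨i'.val / 2, by have := i'.isLt; omega⟩)
    (fun x _ => Finset.mem_univ _)
    (fun y _ => by
      simp only [Finset.mem_filter, Finset.mem_univ, true_and]
      intro j
      exact congrArg y (Fin.ext (show (2 * j.val + 1) / 2 = (2 * j.val) / 2 by omega)))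
    (fun x hx => by
      have hdup := (Finset.mem_filter.mp hx).2
      funext i'
      by_cases hpar : i'.val % 2 = 0
      · exact congrArg x (Fin.ext (show 2 * (i'.val / 2) = i'.val by omega))
      · have h1 := hdup ⟨i'.val / 2, by have := i'.isLt; omega⟩
        have h2 : pSnd (⟨i'.val / 2, by have := i'.isLt; omega⟩ : Fin (n / 2)) = i' :=
          Fin.ext (show 2 * (i'.val / 2) + 1 = i'.val by omega)
        exact h1.symm.trans (congrArg x h2))
    (fun y _ => funext fun j => congrArg y (Fin.ext (show (2 * j.val) / 2 = j.val by omega)))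
    (fun x hx => by
      have hdup := (Finset.mem_filter.mp hx).2
      refine congrArg F ?_
      rw [dupDist_eq]
      exact Finset.prod_congr rfl fun j _ => by rw [if_pos (hdup j), mul_one])

lemma iid_entropy_sum {p : X → ℝ} (hp1 : ∑ a, p a = 1) {ι : Type*} [Fintype ι]
    [DecidableEq ι] :
    ∑ y : ι → X, (∏ i, p (y i)) * Real.log (∏ i, p (y i))
      = (Fintype.card ι : ℝ) * ∑ a, p a * Real.log (p a) := by
  have step1 : ∀ y : ι → X, (∏ i, p (y i)) * Real.log (∏ i, p (y i))
      = ∑ i, (∏ j, p (y j)) * Real.log (p (y i)) := by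
    intro y
    by_cases hz : ∀ i, p (y i) ≠ 0
    · rw [Real.log_prod fun i _ => hz i, Finset.mul_sum]
    · push_neg at hz
      obtain ⟨i₀, h0⟩ := hz
      have hzero : ∏ j, p (y j) = 0 := Finset.prod_eq_zero (Finset.mem_univ i₀) h0
      rw [hzero, zero_mul]
      exact (Finset.sum_eq_zero fun i _ => zero_mul _).symm
  rw [Finset.sum_congr rfl fun y _ => step1 y, Finset.sum_comm]
  have step3 : ∀ i : ι, ∑ y : ι → X, (∏ j, p (y j)) * Real.log (p (y i))
      = ∑ a, p a * Real.log (p a) := by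
    intro i
    have hpt : ∀ y : ι → X, (∏ j, p (y j)) * Real.log (p (y i))
        = ∏ j, (p (y j) * (if j = i then Real.log (p (y j)) else 1)) := by
      intro y
      rw [Finset.prod_mul_distrib,
        Finset.prod_ite_eq' Finset.univ i (fun j => Real.log (p (y j))),
        if_pos (Finset.mem_univ i)]
    rw [Finset.sum_congr rfl fun y _ => hpt y]
    refine Eq.trans (sum_pi_prod (fun j t => p t * (if j = i then Real.log (p t) else 1))) ?_
    have h4 : ∀ j : ι, (∑ t, p t * (if j = i then Real.log (p t) else 1))
        = if j = i then ∑ a, p a * Real.log (p a) else 1 := by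
      intro j
      by_cases h : j = i
      · subst h
        simp only [eq_self_iff_true, if_true]
      · rw [if_neg h]
        refine Eq.trans (Finset.sum_congr rfl fun t _ => by rw [if_neg h, mul_one]) hp1
    rw [Finset.prod_congr rfl fun j _ => h4 j,
      Finset.prod_ite_eq' Finset.univ i (fun _ => ∑ a, p a * Real.log (p a)),
      if_pos (Finset.mem_univ i)]
  rw [Finset.sum_congr rfl fun i _ => step3 i]
  rw [Finset.sum_const, Finset.card_univ, nsmul_eq_mul]

lemma dup_entropy {p : X → ℝ} (hp1 : ∑ a, p a = 1) {n : ℕ} (hn : n % 2 = 0) :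
    shannonEntropy (dupDist p n) = ((n : ℝ) / 2) * shannonEntropy p := by
  rw [shannonEntropy, shannonEntropy]
  have h := dup_support_sum p hn (fun t => t * Real.log t) (by simp)
  rw [h, iid_entropy_sum hp1, Fintype.card_fin]
  have h2 : ((n / 2 : ℕ) : ℝ) = (n : ℝ) / 2 := by
    have h3 : ((n / 2 : ℕ) : ℝ) * 2 = (n : ℝ) := by exact_mod_cast (by omega : n / 2 * 2 = n)
    linarith
  rw [h2]
  ring

lemma q_lt_one {p : X → ℝ} (hp0 : ∀ x, 0 ≤ p x) (hp1 : ∑ a, p a = 1)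
    (hS : 0 < shannonEntropy p) : ∑ a, p a ^ 2 < 1 := by
  have hle1 : ∀ a, p a ≤ 1 := by
    intro a
    have := Finset.single_le_sum (f := p) (fun b _ => hp0 b) (Finset.mem_univ a)
    linarith
  have h2 : ∀ a, p a ^ 2 ≤ p a := fun a => by nlinarith [hp0 a, hle1 a]
  rcases lt_or_eq_of_le (Finset.sum_le_sum fun a (_ : a ∈ Finset.univ) => h2 a) with h | h
  · rwa [hp1] at h
  · exfalso
    have h0 : ∑ a, (p a - p a ^ 2) = 0 := by
      rw [Finset.sum_sub_distrib, h]
      ring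
    have hall := (Finset.sum_eq_zero_iff_of_nonneg fun a _ => by
      have := h2 a; linarith).mp h0
    have hz : ∑ a, p a * Real.log (p a) = 0 := by
      refine Finset.sum_eq_zero fun a _ => ?_
      have ha := hall a (Finset.mem_univ a)
      have h01 : p a = 0 ∨ p a = 1 := by
        have hm : p a * (1 - p a) = 0 := by nlinarith
        rcases mul_eq_zero.mp hm with h | h
        · exact Or.inl h
        · exact Or.inr (by linarith)
      rcases h01 with h | h <;> rw [h] <;> simp
    rw [shannonEntropy, hz] at hS
    norm_num at hS

end Aux

/-- The duplicated distribution `p̃ₙ` has entropy `(n/2)·S(p)` for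
every even `n`; consequently, if `S(p) > 0`, the duplicated source (indexed by even `n`)
is not a Wasserstein almost i.i.d. source along `p`. -/
theorem dup_source_not_Wasserstein
    {X : Type*} [Fintype X] [DecidableEq X]
    (p : X → ℝ) (hp0 : ∀ x, 0 ≤ p x) (hp1 : ∑ x, p x = 1)
    (hS : 0 < shannonEntropy p) :
    (∀ n : ℕ, Even n → shannonEntropy (dupDist p n) = ((n : ℝ) / 2) * shannonEntropy p) ∧
    ¬ Filter.Tendsto
        (fun n : ℕ => (1 / (n : ℝ)) *
          W1 (Matrix.diagonal (fun x : Fin n → X => (dupDist p n x : ℂ)) -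
              Matrix.diagonal (fun x : Fin n → X => ∏ i, (p (x i) : ℂ))))
        (Filter.atTop ⊓ Filter.principal {n : ℕ | Even n}) (nhds 0) := by
  have hqlt := q_lt_one hp0 hp1 hS
  constructor
  · intro n hn
    exact dup_entropy hp1 (Nat.even_iff.mp hn)
  · intro hT
    have hεpos : 0 < (1 - ∑ a, p a ^ 2) / 2 := by linarith
    have h1 := hT.eventually_lt_const hεpos
    have h2 : ∀ᶠ n : ℕ in Filter.atTop ⊓ Filter.principal {n : ℕ | Even n},
        (1 - ∑ a, p a ^ 2) / 2 ≤ (1 / (n : ℝ)) *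
          W1 (Matrix.diagonal (fun x : Fin n → X => (dupDist p n x : ℂ)) -
              Matrix.diagonal (fun x : Fin n → X => ∏ i, (p (x i) : ℂ))) := by
      rw [Filter.eventually_inf_principal]
      filter_upwards [Filter.eventually_ge_atTop 2] with n hn2 hnE
      have hn := Nat.even_iff.mp hnE
      have hlow := W1_lower hp0 hp1 (n := n) hn
      have hhalf : ((n / 2 : ℕ) : ℝ) = (n : ℝ) / 2 := by
        have h3 : ((n / 2 : ℕ) : ℝ) * 2 = (n : ℝ) := by exact_mod_cast (by omega : n / 2 * 2 = n)
        linarith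
      have hn0 : (0 : ℝ) < (n : ℝ) := by exact_mod_cast Nat.pos_of_ne_zero (by omega)
      have hstep : (1 - ∑ a, p a ^ 2) / 2
          = (1 / (n : ℝ)) * (((n / 2 : ℕ) : ℝ) * (1 - ∑ a, p a ^ 2)) := by
        rw [hhalf]
        field_simp
      rw [hstep]
      exact mul_le_mul_of_nonneg_left hlow (by positivity)
    have h3 : ∀ᶠ n : ℕ in Filter.atTop ⊓ Filter.principal {n : ℕ | Even n}, False := by
      filter_upwards [h1, h2] with n ha hb
      linarith
    have hNB : (Filter.atTop ⊓ Filter.principal {n : ℕ | Even n}).NeBot := by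
      rw [Filter.inf_principal_neBot_iff]
      intro U hU
      obtain ⟨a, ha⟩ := Filter.mem_atTop_sets.mp hU
      exact ⟨2 * a, ha _ (by omega), ⟨a, by ring⟩⟩
    exact hNB.ne (Filter.eventually_false_iff_eq_bot.mp h3)


end AlmostIID
end
end
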